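/- Let t_1, …, t_m be integers with 1 ≤ t_i ≤ n_i − 1 for each i. If at least one of the codes C_{t_1}(A_1, v_1), …, C_{t_m}(A_m, v_m) is not LCD, then the generalized affine Cartesian code C_{t_1 + ⋯ + t_m}(𝒜, v_1 × ⋯ × v_m) is not LCD. -/

import Mathlib

open MvPolynomial

/-- The points of the Cartesian set `𝒜 = A 0 × ⋯ × A (m-1)`. -/
abbrev CartPts {K : Type*} {m : ℕ} (A : Fin m → Finset K) :=
  { x : Fin m → K // ∀ i, x i ∈ A i }

/-- The space `S_{<k}` of multivariate polynomials of total degree less than `k`. -/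
def degLT (K : Type*) [Field K] (m k : ℕ) : Submodule K (MvPolynomial (Fin m) K) where
  carrier := {f | ∀ d ∈ f.support, (d.sum fun _ e => e) < k}
  zero_mem' := by simp
  add_mem' := fun {f g} hf hg d hd => by
    rcases Finset.mem_union.mp (MvPolynomial.support_add hd) with h | h
    exacts [hf d h, hg d h]
  smul_mem' := fun c f hf d hd => hf d (MvPolynomial.support_smul hd)

/-- The evaluation map `ev : f ↦ (v_a · f(a))_{a ∈ 𝒜}`. -/
noncomputable def evalLM {K : Type*} [Field K] {m : ℕ} (A : Fin m → Finset K)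
    (v : CartPts A → K) : MvPolynomial (Fin m) K →ₗ[K] (CartPts A → K) :=
  LinearMap.pi fun a => v a • (MvPolynomial.aeval (a.1 : Fin m → K)).toLinearMap

/-- The generalized affine Cartesian code `C_k(𝒜, v)`, the image of `S_{<k}` under `ev_k`. -/
noncomputable def cartCode {K : Type*} [Field K] {m : ℕ} (k : ℕ) (A : Fin m → Finset K)
    (v : CartPts A → K) : Submodule K (CartPts A → K) :=
  Submodule.map (evalLM A v) (degLT K m k)

/-- The dual code `C^⊥` with respect to the standard dot product. -/
def dualCode {K : Type*} [Field K] {ι : Type*} [Fintype ι] (C : Submodule K (ι → K)) :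
    Submodule K (ι → K) where
  carrier := {w | ∀ c ∈ C, ∑ i, w i * c i = 0}
  zero_mem' := by simp
  add_mem' := fun {w w'} hw hw' c hc => by
    simp only [Pi.add_apply, add_mul, Finset.sum_add_distrib, hw c hc, hw' c hc, add_zero]
  smul_mem' := fun r w hw c hc => by
    simp only [Pi.smul_apply, smul_eq_mul, mul_assoc, ← Finset.mul_sum, hw c hc, mul_zero]

/-- A linear code is LCD if it meets its dual trivially. -/
def IsLCD {K : Type*} [Field K] {ι : Type*} [Fintype ι] (C : Submodule K (ι → K)) : Prop :=
  C ⊓ dualCode C = ⊥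

/-- The one-variable generalized Reed–Solomon code on a set `B ⊆ K` with weights `w`. -/
noncomputable def grsCode {K : Type*} [Field K] (B : Finset K) (k : ℕ) (w : {x // x ∈ B} → K) :
    Submodule K ({x // x ∈ B} → K) :=
  Submodule.map (LinearMap.pi fun b => w b • (Polynomial.aeval (b : K)).toLinearMap)
    (Polynomial.degreeLT K k)

/-! If `C_{t_j}(A_j, w_j)` is not LCD, a nonzero vector of `C ∩ C^⊥` is `w_j · g` with
`deg g < t_j` and `∑_b w_j(b)² g(b) b^d = 0` for all `d < t_j`. For every other factor a
dimension count (`t_i` linear conditions on the `t_i + 1` coefficients of a polynomial of degree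
`≤ t_i`) gives such a `q_i`, of degree `≤ t_i`, which does not vanish on `A_i` because
`t_i < |A_i|`. The product `∏ q_i(X_i)` has total degree `< ∑ t_i` and a nonzero evaluation
vector `u`. Every monomial `X^d` of total degree `< ∑ t_i` has some `d_i < t_i`, so by Fubini the
inner product of `u` with the evaluation vector of `X^d` is a product with a vanishing factor. -/

open Polynomial in
/-- For `μ = w²` this says that `w · q` is orthogonal to the code `C_t(B, w)`. -/
def LowMomentsVanish {K : Type*} [Field K] (B : Finset K) (μ : {x // x ∈ B} → K) (t : ℕ)
    (q : K[X]) : Prop :=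
  ∀ d < t, ∑ b : {x // x ∈ B}, μ b * b.1 ^ d * q.eval b.1 = 0

theorem not_isLCD_iff {K : Type*} [Field K] {ι : Type*} [Fintype ι] {C : Submodule K (ι → K)} :
    ¬ IsLCD C ↔ ∃ u ∈ C, u ∈ dualCode C ∧ u ≠ 0 := by
  simp only [IsLCD, ← ne_eq, Submodule.ne_bot_iff, Submodule.mem_inf, and_assoc]

section Univariate

open Polynomial

variable {K : Type*} [Field K] (B : Finset K)

theorem exists_lowMomentsVanish (μ : {x // x ∈ B} → K) (t : ℕ) (ht : t < B.card) :
    ∃ q : K[X], q.natDegree ≤ t ∧ (∃ b : {x // x ∈ B}, q.eval b.1 ≠ 0) ∧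
      LowMomentsVanish B μ t q := by
  let moments : K[X] →ₗ[K] (Fin t → K) :=
    LinearMap.pi fun d => ∑ b : {x // x ∈ B}, (μ b * b.1 ^ (d : ℕ)) • leval b.1
  have hdim : Module.finrank K (Fin t → K) < Module.finrank K (degreeLT K (t + 1)) := by
    simp [(degreeLTEquiv K (t + 1)).finrank_eq]
  obtain ⟨⟨q, hq_deg⟩, hq_ker, hq_ne⟩ :=
    (Submodule.ne_bot_iff _).mp (LinearMap.ker_ne_bot_of_finrank_lt
      (f := moments ∘ₗ (degreeLT K (t + 1)).subtype) hdim)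
  have hq0 : q ≠ 0 := fun h => hq_ne (by simp [h])
  have hq_natDeg : q.natDegree ≤ t :=
    Nat.lt_succ_iff.mp ((natDegree_lt_iff_degree_lt hq0).mpr (mem_degreeLT.mp hq_deg))
  refine ⟨q, hq_natDeg, ?_, fun d hd => ?_⟩
  · by_contra! hvanish
    exact hq0 (eq_zero_of_natDegree_lt_card_of_eval_eq_zero' q B
      (fun x hx => hvanish ⟨x, hx⟩) (hq_natDeg.trans_lt ht))
  · have := congrFun (LinearMap.mem_ker.mp hq_ker) ⟨d, hd⟩
    simpa only [LinearMap.comp_apply, Submodule.subtype_apply, moments, LinearMap.pi_apply,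
      LinearMap.coe_sum, LinearMap.coe_smul, Finset.sum_apply, Pi.smul_apply, leval_apply,
      smul_eq_mul, Pi.zero_apply] using this

theorem exists_lowMomentsVanish_of_not_isLCD_grsCode {t : ℕ} {w : {x // x ∈ B} → K}
    (h : ¬ IsLCD (grsCode B t w)) :
    ∃ g : K[X], g.natDegree < t ∧ (∃ b : {x // x ∈ B}, g.eval b.1 ≠ 0) ∧
      LowMomentsVanish B (w ^ 2) t g := by
  obtain ⟨c, ⟨g, hg_deg, rfl⟩, hc_dual, hc_ne⟩ := not_isLCD_iff.mp h
  have grs_apply : ∀ (p : K[X]) b,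
      (LinearMap.pi fun b => w b • (Polynomial.aeval b.1).toLinearMap) p b =
        w b * p.eval b.1 := by
    simp [Polynomial.coe_aeval_eq_eval]
  obtain ⟨b, hb⟩ := Function.ne_iff.mp hc_ne
  have hgb : g.eval b.1 ≠ 0 := fun h0 => hb (by rw [grs_apply, h0, mul_zero]; rfl)
  have hg0 : g ≠ 0 := by rintro rfl; simp at hgb
  refine ⟨g, (natDegree_lt_iff_degree_lt hg0).mpr (mem_degreeLT.mp hg_deg), ⟨b, hgb⟩,
    fun d hd => ?_⟩
  have hXd : (Polynomial.X ^ d : K[X]) ∈ degreeLT K t := by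
    rw [mem_degreeLT, degree_X_pow]; exact_mod_cast hd
  rw [← hc_dual _ (Submodule.mem_map_of_mem hXd)]
  refine Finset.sum_congr rfl fun b _ => ?_
  rw [grs_apply, grs_apply, Polynomial.eval_pow, Polynomial.eval_X, Pi.pow_apply]
  ring

end Univariate

section Cartesian

variable {K : Type*} [Field K] {m : ℕ} {A : Fin m → Finset K}

theorem evalLM_apply (v : CartPts A → K) (f : MvPolynomial (Fin m) K) (a : CartPts A) :
    evalLM A v f a = v a * eval a.1 f := by
  simp [evalLM]

theorem evalLM_mem_cartCode {k : ℕ} (v : CartPts A → K) {f : MvPolynomial (Fin m) K}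
    (hf : f.totalDegree < k) : evalLM A v f ∈ cartCode k A v :=
  Submodule.mem_map_of_mem fun _ hd => (le_totalDegree hd).trans_lt hf

theorem exists_lt_of_mem_degLT {t : Fin m → ℕ} {f : MvPolynomial (Fin m) K}
    (hf : f ∈ degLT K m (∑ i, t i)) {d : Fin m →₀ ℕ} (hd : d ∈ f.support) :
    ∃ i, d i < t i := by
  have := hf d hd
  rw [Finsupp.sum_fintype _ _ fun _ => rfl] at this
  obtain ⟨i, -, hi⟩ := Finset.exists_lt_of_sum_lt this
  exact ⟨i, hi⟩

theorem sum_cartPts_prod [Fintype K] [DecidableEq K] (T : ∀ i, {x // x ∈ A i} → K) :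
    ∑ a : CartPts A, ∏ i, T i ⟨a.1 i, a.2 i⟩ = ∏ i, ∑ b, T i b := by
  rw [Fintype.prod_sum, ← Equiv.subtypePiEquivPi.sum_comp]
  rfl

theorem eval_aeval_X (i : Fin m) (p : Polynomial K) (x : Fin m → K) :
    eval x (Polynomial.aeval (X i) p) = p.eval (x i) := by
  induction p using Polynomial.induction_on' <;> simp_all

theorem totalDegree_aeval_X_le (i : Fin m) (p : Polynomial K) :
    (Polynomial.aeval (X i : MvPolynomial (Fin m) K) p).totalDegree ≤ p.natDegree := by
  rw [Polynomial.aeval_eq_sum_range]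
  refine (totalDegree_finsetSum _ _).trans (Finset.sup_le fun k hk => ?_)
  exact (totalDegree_smul_le _ _).trans_eq (totalDegree_X_pow i k) |>.trans
    (Nat.lt_succ_iff.mp (Finset.mem_range.mp hk))

noncomputable def prodPoly (q : Fin m → Polynomial K) : MvPolynomial (Fin m) K :=
  ∏ i, Polynomial.aeval (X i) (q i)

theorem eval_prodPoly (q : Fin m → Polynomial K) (x : Fin m → K) :
    eval x (prodPoly q) = ∏ i, (q i).eval (x i) := by
  simp only [prodPoly, map_prod, eval_aeval_X]

theorem totalDegree_prodPoly_lt {q : Fin m → Polynomial K} {t : Fin m → ℕ}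
    (hle : ∀ i, (q i).natDegree ≤ t i) {j : Fin m} (hlt : (q j).natDegree < t j) :
    (prodPoly q).totalDegree < ∑ i, t i := calc
  (prodPoly q).totalDegree ≤ ∑ i, (Polynomial.aeval (X i) (q i)).totalDegree :=
    totalDegree_finsetProd _ _
  _ ≤ ∑ i, (q i).natDegree := Finset.sum_le_sum fun i _ => totalDegree_aeval_X_le i (q i)
  _ < ∑ i, t i := Finset.sum_lt_sum (fun i _ => hle i) ⟨j, Finset.mem_univ j, hlt⟩

variable (w : ∀ i, {x // x ∈ A i} → K)

theorem evalLM_prodPoly_ne_zero (hw : ∀ i b, w i b ≠ 0) {q : Fin m → Polynomial K}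
    (hq : ∀ i, ∃ b : {x // x ∈ A i}, (q i).eval b.1 ≠ 0) :
    evalLM A (fun a => ∏ i, w i ⟨a.1 i, a.2 i⟩) (prodPoly q) ≠ 0 := by
  choose b hb using hq
  refine Function.ne_iff.mpr ⟨⟨fun i => b i, fun i => (b i).2⟩, ?_⟩
  rw [evalLM_apply, eval_prodPoly]
  exact mul_ne_zero (Finset.prod_ne_zero_iff.mpr fun i _ => hw i _)
    (Finset.prod_ne_zero_iff.mpr fun i _ => hb i)

theorem evalLM_prodPoly_mem_dualCode [Fintype K] [DecidableEq K] {q : Fin m → Polynomial K}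
    {t : Fin m → ℕ} (hq : ∀ i, LowMomentsVanish (A i) (w i ^ 2) (t i) (q i)) :
    evalLM A (fun a => ∏ i, w i ⟨a.1 i, a.2 i⟩) (prodPoly q) ∈
      dualCode (cartCode (∑ i, t i) A (fun a => ∏ i, w i ⟨a.1 i, a.2 i⟩)) := by
  rintro _ ⟨f, hf, rfl⟩
  let term : (Fin m →₀ ℕ) → ∀ i, {x // x ∈ A i} → K :=
    fun d i b => (w i ^ 2) b * b.1 ^ d i * (q i).eval b.1
  calc _ = ∑ a : CartPts A, ∑ d ∈ f.support,
          coeff d f * ∏ i, term d i ⟨a.1 i, a.2 i⟩ := by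
        refine Finset.sum_congr rfl fun a _ => ?_
        simp only [evalLM_apply, eval_prodPoly, eval_eq' a.1 f, Finset.mul_sum, term,
          Pi.pow_apply, Finset.prod_mul_distrib, Finset.prod_pow]
        exact Finset.sum_congr rfl fun d _ => by ring
    _ = ∑ d ∈ f.support, coeff d f * ∏ i, ∑ b, term d i b := by
        rw [Finset.sum_comm]
        simp only [← Finset.mul_sum, sum_cartPts_prod]
    _ = 0 := Finset.sum_eq_zero fun d hd => by
        obtain ⟨i, hi⟩ := exists_lt_of_mem_degLT hf hd
        rw [Finset.prod_eq_zero (Finset.mem_univ i) (hq i (d i) hi), mul_zero]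

end Cartesian

theorem cartCode_not_isLCD_general {K : Type*} [Field K] [Fintype K] [DecidableEq K]
    {m : ℕ} (A : Fin m → Finset K)
    (w : ∀ i, {x // x ∈ A i} → K) (hw : ∀ i b, w i b ≠ 0)
    (t : Fin m → ℕ) (ht1 : ∀ i, 1 ≤ t i) (ht2 : ∀ i, t i ≤ (A i).card - 1)
    (h : ∃ i, ¬ IsLCD (grsCode (A i) (t i) (w i))) :
    ¬ IsLCD (cartCode (∑ i, t i) A (fun a => ∏ i, w i ⟨a.1 i, a.2 i⟩)) := by
  obtain ⟨j, hj⟩ := h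
  obtain ⟨g, hg_deg, hg_ne, hg_mom⟩ := exists_lowMomentsVanish_of_not_isLCD_grsCode _ hj
  have ht : ∀ i, t i < (A i).card := fun i => by have := ht1 i; have := ht2 i; omega
  choose q hq_deg hq_ne hq_mom using fun i => exists_lowMomentsVanish (A i) (w i ^ 2) (t i) (ht i)
  let q' := Function.update q j g
  have hdeg : (prodPoly q').totalDegree < ∑ i, t i :=
    totalDegree_prodPoly_lt (j := j)
      ((Function.forall_update_iff q (p := fun i r => r.natDegree ≤ t i)).mpr
        ⟨hg_deg.le, fun i _ => hq_deg i⟩) (by simpa [q'] using hg_deg)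
  have hmom : ∀ i, LowMomentsVanish (A i) (w i ^ 2) (t i) (q' i) :=
    (Function.forall_update_iff q (p := fun i => LowMomentsVanish (A i) (w i ^ 2) (t i))).mpr
      ⟨hg_mom, fun i _ => hq_mom i⟩
  have hne : ∀ i, ∃ b : {x // x ∈ A i}, (q' i).eval b.1 ≠ 0 :=
    (Function.forall_update_iff q (p := fun i r => ∃ b : {x // x ∈ A i}, r.eval b.1 ≠ 0)).mpr
      ⟨hg_ne, fun i _ => hq_ne i⟩
  exact not_isLCD_iff.mpr ⟨_, evalLM_mem_cartCode _ hdeg, evalLM_prodPoly_mem_dualCode w hmom,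
    evalLM_prodPoly_ne_zero w hw hne⟩

/-- If at least one of the component codes `C_{t_i}(A_i, v_i)` is not LCD, then
`C_{t_1 + ⋯ + t_m}(𝒜, v_1 × ⋯ × v_m)` is not LCD. -/
theorem cartCode_not_isLCD {K : Type*} [Field K] [Fintype K] [DecidableEq K]
    {m : ℕ} (hm : 1 ≤ m) (A : Fin m → Finset K) (hA : ∀ i, (A i).Nonempty)
    (w : ∀ i, {x // x ∈ A i} → K) (hw : ∀ i b, w i b ≠ 0)
    (t : Fin m → ℕ) (ht1 : ∀ i, 1 ≤ t i) (ht2 : ∀ i, t i ≤ (A i).card - 1)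
    (h : ∃ i, ¬ IsLCD (grsCode (A i) (t i) (w i))) :
    ¬ IsLCD (cartCode (∑ i, t i) A (fun a => ∏ i, w i ⟨a.1 i, a.2 i⟩)) :=
  cartCode_not_isLCD_general A w hw t ht1 ht2 h
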